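/- Let H be a finite poset, K a field, and A = K[H]/I with I homogeneous. If for every revlex linear extension τ of the partial order on H one has in_τ(I) = J_H (the ideal of products of incomparable pairs), then A is a homogeneous ASL on H. -/

import Mathlib

open MvPolynomial

attribute [local instance] MvPolynomial.gradedAlgebra

/-- Total degree of a monomial exponent vector. -/
def mdeg {H : Type*} (μ : H →₀ ℕ) : ℕ := μ.sum fun _ e => e

/-- The (degree) reverse lexicographic order on monomials induced by the
variable order `σ` (larger `σ`-value = larger variable): `μ < ν` iff
`deg μ < deg ν`, or the degrees agree and `μ` has the strictly larger exponent
at the `σ`-smallest variable where `μ` and `ν` differ. -/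
def RevLexLT {H : Type*} (σ : H → ℕ) (μ ν : H →₀ ℕ) : Prop :=
  mdeg μ < mdeg ν ∨ (mdeg μ = mdeg ν ∧
    ∃ h, ν h < μ h ∧ ∀ h', σ h' < σ h → μ h' = ν h')

/-- `μ` is the leading (initial) monomial of `f` for the revlex order given by `σ`. -/
def IsLeadMon {K H : Type*} [Field K] (σ : H → ℕ) (f : MvPolynomial H K)
    (μ : H →₀ ℕ) : Prop :=
  μ ∈ f.support ∧ ∀ ν ∈ f.support, ν ≠ μ → RevLexLT σ ν μ

/-- The initial ideal `in_τ(I)`, generated by the leading monomials of the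
nonzero elements of `I`. -/
noncomputable def initialIdeal {K H : Type*} [Field K] (σ : H → ℕ)
    (I : Ideal (MvPolynomial H K)) : Ideal (MvPolynomial H K) :=
  Ideal.span { p | ∃ f ∈ I, ∃ μ, IsLeadMon σ f μ ∧ p = monomial μ (1 : K) }

/-- The monomial ideal `J_H` generated by the products `xy` of incomparable
elements `x, y ∈ H`. -/
noncomputable def JHIdeal (K H : Type*) [Field K] [PartialOrder H] : Ideal (MvPolynomial H K) :=
  Ideal.span { p | ∃ x y : H, ¬ x ≤ y ∧ ¬ y ≤ x ∧ p = X x * X y }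

/-- `σ : H → ℕ` encodes a linear extension of the partial order on `H`. -/
def IsLinExt {H : Type*} [PartialOrder H] (σ : H → ℕ) : Prop :=
  Function.Injective σ ∧ ∀ u v : H, u < v → σ u < σ v

/-- A monomial is standard if its support is a chain of `H`. -/
def IsStdMon {H : Type*} [PartialOrder H] (μ : H →₀ ℕ) : Prop :=
  ∀ x ∈ μ.support, ∀ y ∈ μ.support, x ≤ y ∨ y ≤ x

/-!
Fix a linear extension `σ`. The monomial ideal `J_H` contains exactly the non-standard
monomials, so `in_σ(I) = J_H` says that the leading monomial of every nonzero element of `I`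
is non-standard. Hence no nonzero combination of standard monomials lies in `I` (ASL1), and,
by induction along the revlex order, every monomial is congruent modulo `I` to a combination of
standard ones; using homogeneity, `xy ≡ ∑ λ_{zt} zt` with `z ≤ t`. The leading monomial of
`xy - ∑ λ_{zt} zt` is `xy` for every admissible `σ`, so each `zt` precedes `xy` in all these
revlex orders; a linear extension listing the down-set of `x` first then forces `z < x`, and
likewise `z < y` (ASL2).
-/

open Finsupp (single)

section Monomials

variable {H : Type*} {σ : H → ℕ}

theorem mdeg_eq_degree (μ : H →₀ ℕ) : mdeg μ = μ.degree := rfl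

theorem single_add_single_apply_ne_zero {z t a : H} :
    (single z 1 + single t 1 : H →₀ ℕ) a ≠ 0 ↔ a = z ∨ a = t := by
  classical
  simp [Finsupp.single_apply, eq_comm, or_iff_not_imp_left]

theorem single_add_single_le_iff {x y : H} (hxy : x ≠ y) {μ : H →₀ ℕ} :
    single x 1 + single y 1 ≤ μ ↔ x ∈ μ.support ∧ y ∈ μ.support := by
  classical
  simp only [Finsupp.mem_support_iff, Finsupp.le_def, Finsupp.add_apply, Finsupp.single_apply]
  refine ⟨fun h => ⟨?_, ?_⟩, fun h a => ?_⟩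
  · simpa [hxy.symm, Nat.one_le_iff_ne_zero] using h x
  · simpa [hxy, Nat.one_le_iff_ne_zero] using h y
  · split_ifs <;> grind

theorem exists_lt_of_mdeg_eq_of_ne {μ ν : H →₀ ℕ} (hdeg : mdeg ν = mdeg μ) (hne : ν ≠ μ) :
    ∃ b, ν b < μ b := by
  by_contra hcon
  push Not at hcon
  have hle : μ ≤ ν := hcon
  rw [mdeg_eq_degree, mdeg_eq_degree, ← tsub_add_cancel_of_le hle, map_add] at hdeg
  have hzero : ν - μ = 0 := Finsupp.degree_eq_zero_iff _ |>.1 (by omega)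
  exact hne (le_antisymm (tsub_eq_zero_iff_le.1 hzero) hle)

theorem RevLexLT.mdeg_le {μ ν : H →₀ ℕ} (h : RevLexLT σ μ ν) : mdeg μ ≤ mdeg ν :=
  h.elim le_of_lt fun h => h.1.le

theorem revLexLT_irrefl (σ : H → ℕ) (μ : H →₀ ℕ) : ¬ RevLexLT σ μ μ := by
  rintro (h | ⟨-, a, h, -⟩) <;> exact lt_irrefl _ h

theorem RevLexLT.trans (hσ : Function.Injective σ) {μ ν ρ : H →₀ ℕ}
    (h₁ : RevLexLT σ μ ν) (h₂ : RevLexLT σ ν ρ) : RevLexLT σ μ ρ := by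
  rcases h₁ with h₁ | ⟨e₁, a, ha, hbelow₁⟩
  · exact Or.inl (h₁.trans_le h₂.mdeg_le)
  rcases h₂ with h₂ | ⟨e₂, b, hb, hbelow₂⟩
  · exact Or.inl (e₁.trans_lt h₂)
  refine Or.inr ⟨e₁.trans e₂, ?_⟩
  rcases lt_trichotomy (σ a) (σ b) with hab | hab | hab
  · exact ⟨a, hbelow₂ a hab ▸ ha, fun c hc => (hbelow₁ c hc).trans (hbelow₂ c (hc.trans hab))⟩
  · obtain rfl := hσ hab
    exact ⟨a, hb.trans ha, fun c hc => (hbelow₁ c hc).trans (hbelow₂ c hc)⟩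
  · exact ⟨b, hbelow₁ b hab ▸ hb, fun c hc => (hbelow₁ c (hc.trans hab)).trans (hbelow₂ c hc)⟩

theorem revLexLT_or_revLexLT (σ : H → ℕ) {μ ν : H →₀ ℕ} (h : μ ≠ ν) :
    RevLexLT σ μ ν ∨ RevLexLT σ ν μ := by
  rcases lt_trichotomy (mdeg μ) (mdeg ν) with hd | hd | hd
  · exact Or.inl (Or.inl hd)
  · classical
    obtain ⟨a, ha, hmin⟩ := (μ.neLocus ν).exists_min_image σ (Finsupp.nonempty_neLocus_iff.2 h)
    have hbelow : ∀ c, σ c < σ a → μ c = ν c := fun c hc =>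
      not_not.1 fun hne => (hmin c (Finsupp.mem_neLocus.2 hne)).not_gt hc
    rcases (Finsupp.mem_neLocus.1 ha).lt_or_gt with hlt | hgt
    · exact Or.inr (Or.inr ⟨hd.symm, a, hlt, fun c hc => (hbelow c hc).symm⟩)
    · exact Or.inl (Or.inr ⟨hd, a, hgt, hbelow⟩)
  · exact Or.inr (Or.inl hd)

theorem RevLexLT.add_left {μ ν : H →₀ ℕ} (h : RevLexLT σ μ ν) (δ : H →₀ ℕ) :
    RevLexLT σ (δ + μ) (δ + ν) := by
  simp only [RevLexLT, mdeg_eq_degree, map_add, Finsupp.add_apply] at h ⊢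
  rcases h with h | ⟨e, a, ha, hbelow⟩
  · exact Or.inl (by omega)
  · exact Or.inr ⟨by omega, a, by omega, fun c hc => by rw [hbelow c hc]⟩

theorem revLexLT_wellFounded [Finite H] (hσ : Function.Injective σ) :
    WellFounded (RevLexLT σ) := by
  have hfin : ∀ μ, {ν | RevLexLT σ ν μ}.Finite := fun μ =>
    (Finsupp.finite_of_degree_le (mdeg μ)).subset fun ν hν => RevLexLT.mdeg_le hν
  refine Subrelation.wf (fun {ν μ} h => ?_) (measure fun μ => {ν | RevLexLT σ ν μ}.ncard).wf
  refine Set.ncard_lt_ncard ⟨fun ρ hρ => RevLexLT.trans hσ hρ h, fun hsub => ?_⟩ (hfin μ)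
  exact revLexLT_irrefl σ ν (hsub h)

end Monomials

section Polynomials

variable {K H : Type*} [Field K] {σ : H → ℕ} {I : Ideal (MvPolynomial H K)}

theorem X_mul_X_eq_monomial (x y : H) :
    (X x * X y : MvPolynomial H K) = monomial (single x 1 + single y 1) 1 := by
  rw [X, X, monomial_mul, one_mul]

theorem mem_of_forall_monomial_mem {M : Submodule K (MvPolynomial H K)} {p : MvPolynomial H K}
    (h : ∀ ν ∈ p.support, monomial ν (1 : K) ∈ M) : p ∈ M := by
  have hp : p ∈ restrictSupport K (p.support : Set (H →₀ ℕ)) :=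
    (mem_restrictSupport_iff K).2 subset_rfl
  rw [restrictSupport_eq_span] at hp
  exact Submodule.span_le.2 (Set.image_subset_iff.2 h) hp

theorem IsLeadMon.monomial_mul {f : MvPolynomial H K} {μ : H →₀ ℕ} (h : IsLeadMon σ f μ)
    (δ : H →₀ ℕ) : IsLeadMon σ (monomial δ (1 : K) * f) (δ + μ) := by
  classical
  have hsupp : (monomial δ (1 : K) * f).support = f.support.map (addLeftEmbedding δ) :=
    AddMonoidAlgebra.support_coeff_single_mul f _ (by simp) _
  simp only [IsLeadMon, hsupp, Finset.mem_map, addLeftEmbedding_apply, forall_exists_index,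
    and_imp, forall_apply_eq_imp_iff₂]
  exact ⟨⟨μ, h.1, rfl⟩, fun ν hν hne => (h.2 ν hν fun e => hne (e ▸ rfl)).add_left δ⟩

theorem exists_isLeadMon (hσ : Function.Injective σ) {f : MvPolynomial H K} (hf : f ≠ 0) :
    ∃ μ, IsLeadMon σ f μ := by
  have hwf : WellFounded fun a b : f.support => RevLexLT σ b a := by
    have : IsTrans f.support fun a b => RevLexLT σ b a :=
      ⟨fun _ _ _ h₁ h₂ => RevLexLT.trans hσ h₂ h₁⟩
    have : Std.Irrefl fun a b : f.support => RevLexLT σ b a := ⟨fun a => revLexLT_irrefl σ a⟩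
    exact Finite.wellFounded_of_trans_of_irrefl _
  obtain ⟨ν₀, hν₀⟩ := support_nonempty.2 hf
  obtain ⟨⟨μ, hμ⟩, -, hmax⟩ := hwf.has_min Set.univ ⟨⟨ν₀, hν₀⟩, trivial⟩
  exact ⟨μ, hμ, fun ν hν hne =>
    (revLexLT_or_revLexLT σ hne).resolve_right fun h => hmax ⟨ν, hν⟩ trivial h⟩

theorem IsLeadMon.revLexLT_of_mem_support_sub {f : MvPolynomial H K} {μ ν : H →₀ ℕ}
    (h : IsLeadMon σ f μ) (hν : ν ∈ (f - monomial μ (coeff μ f)).support) :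
    RevLexLT σ ν μ := by
  classical
  rw [mem_support_iff, coeff_sub, coeff_monomial] at hν
  by_cases hμν : μ = ν
  · subst hμν
    simp at hν
  · rw [if_neg hμν, sub_zero] at hν
    exact h.2 ν (mem_support_iff.2 hν) (Ne.symm hμν)

theorem exists_isLeadMon_of_monomial_mem_initialIdeal {μ : H →₀ ℕ}
    (h : monomial μ (1 : K) ∈ initialIdeal σ I) : ∃ g ∈ I, IsLeadMon σ g μ := by
  classical
  have hin : initialIdeal σ I = Ideal.span ((fun ν => monomial ν (1 : K)) ''
      {ν | ∃ f ∈ I, IsLeadMon σ f ν}) := by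
    rw [initialIdeal]
    congr 1
    ext p
    simp only [Set.mem_ofPred_eq, Set.mem_image]
    aesop
  rw [hin, mem_ideal_span_monomial_image, support_monomial, if_neg one_ne_zero] at h
  obtain ⟨ν, ⟨f, hf, hν⟩, hle⟩ := h μ (Finset.mem_singleton_self μ)
  refine ⟨monomial (μ - ν) 1 * f, I.mul_mem_left _ hf, ?_⟩
  simpa only [tsub_add_cancel_of_le hle] using hν.monomial_mul (μ - ν)

end Polynomials

section StandardMonomials

variable {K H : Type*} [Field K] [PartialOrder H] {σ : H → ℕ} {I : Ideal (MvPolynomial H K)}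

theorem monomial_mem_JHIdeal_iff {μ : H →₀ ℕ} :
    monomial μ (1 : K) ∈ JHIdeal K H ↔ ¬ IsStdMon μ := by
  classical
  have hJ : JHIdeal K H = Ideal.span ((fun ν => monomial ν (1 : K)) ''
      {ν | ∃ x y : H, ¬ x ≤ y ∧ ¬ y ≤ x ∧ ν = single x 1 + single y 1}) := by
    rw [JHIdeal]
    congr 1
    ext p
    simp only [X_mul_X_eq_monomial, Set.mem_ofPred_eq, Set.mem_image]
    aesop
  rw [hJ, mem_ideal_span_monomial_image, support_monomial, if_neg one_ne_zero]
  simp only [Finset.mem_singleton, forall_eq, Set.mem_ofPred_eq, IsStdMon]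
  constructor
  · rintro ⟨-, ⟨x, y, hxy, hyx, rfl⟩, hle⟩ hstd
    obtain ⟨hx, hy⟩ := (single_add_single_le_iff (ne_of_not_le hxy)).1 hle
    exact (hstd x hx y hy).elim hxy hyx
  · intro hstd
    push Not at hstd
    obtain ⟨x, hx, y, hy, hxy, hyx⟩ := hstd
    exact ⟨_, ⟨x, y, hxy, hyx, rfl⟩, (single_add_single_le_iff (ne_of_not_le hxy)).2 ⟨hx, hy⟩⟩

theorem IsLeadMon.not_isStdMon (hinit : initialIdeal σ I = JHIdeal K H)
    {f : MvPolynomial H K} (hf : f ∈ I) {μ : H →₀ ℕ} (h : IsLeadMon σ f μ) : ¬ IsStdMon μ := by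
  rw [← monomial_mem_JHIdeal_iff (K := K), ← hinit]
  exact Ideal.subset_span ⟨f, hf, μ, h, rfl⟩

theorem monomial_mem_sup_restrictSupport [Finite H] (hσ : Function.Injective σ)
    (hinit : initialIdeal σ I = JHIdeal K H) (μ : H →₀ ℕ) :
    monomial μ (1 : K) ∈ I.restrictScalars K ⊔ restrictSupport K {ν | IsStdMon ν} := by
  set M := I.restrictScalars K ⊔ restrictSupport K {ν : H →₀ ℕ | IsStdMon ν}
  induction μ using (revLexLT_wellFounded hσ).induction with
  | _ μ ih =>
  by_cases hμ : IsStdMon μ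
  · exact Submodule.mem_sup_right ((monomial_mem_restrictSupport K).2 (Or.inl hμ))
  obtain ⟨g, hgI, hg⟩ := exists_isLeadMon_of_monomial_mem_initialIdeal
    (hinit ▸ monomial_mem_JHIdeal_iff.2 hμ)
  have hlower : g - monomial μ (coeff μ g) ∈ M :=
    mem_of_forall_monomial_mem fun ν hν => ih ν (hg.revLexLT_of_mem_support_sub hν)
  have hlead : monomial μ (coeff μ g) ∈ M := by
    simpa using M.sub_mem (Submodule.mem_sup_left hgI) hlower
  simpa [smul_monomial, mem_support_iff.1 hg.1] using M.smul_mem (coeff μ g)⁻¹ hlead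

theorem exists_isHomogeneous_sub_mem [Finite H] (hσ : Function.Injective σ)
    (hinit : initialIdeal σ I = JHIdeal K H) (hhom : I.IsHomogeneous (homogeneousSubmodule H K))
    {d : ℕ} {f : MvPolynomial H K} (hf : f.IsHomogeneous d) :
    ∃ r : MvPolynomial H K, r.IsHomogeneous d ∧ (∀ ν ∈ r.support, IsStdMon ν) ∧ f - r ∈ I := by
  obtain ⟨i, hi, r, hr, rfl⟩ := Submodule.mem_sup.1
    (mem_of_forall_monomial_mem (p := f) fun ν _ => monomial_mem_sup_restrictSupport hσ hinit ν)
  refine ⟨homogeneousComponent d r, homogeneousComponent_isHomogeneous d r, fun ν hν => ?_, ?_⟩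
  · rw [support_homogeneousComponent, Finset.mem_filter] at hν
    exact (mem_restrictSupport_iff K).1 hr hν.1
  · have hi' : homogeneousComponent d i ∈ I := by
      have := hhom d ((Submodule.restrictScalars_mem K I i).1 hi)
      rwa [← DirectSum.Decomposition.decompose'_eq, decomposition.decompose'_apply] at this
    rwa [← homogeneousComponent_eq_self hf, map_add, add_sub_cancel_right]

theorem linearIndependent_isStdMon (hσ : Function.Injective σ)
    (hinit : initialIdeal σ I = JHIdeal K H) :
    LinearIndependent K fun μ : {μ : H →₀ ℕ // IsStdMon μ} =>
      Ideal.Quotient.mk I (monomial μ.1 (1 : K)) := by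
  have hv : LinearIndependent K fun μ : {μ : H →₀ ℕ // IsStdMon μ} => monomial μ.1 (1 : K) :=
    (basisMonomials H K).linearIndependent.comp _ Subtype.val_injective
  have hspan : Submodule.span K (Set.range fun μ : {μ : H →₀ ℕ // IsStdMon μ} =>
      monomial μ.1 (1 : K)) ≤ restrictSupport K {μ | IsStdMon μ} :=
    Submodule.span_le.2 <| Set.range_subset_iff.2 fun μ =>
      (monomial_mem_restrictSupport K).2 (Or.inl μ.2)
  refine hv.map (f := (Ideal.Quotient.mkₐ K I).toLinearMap) (Submodule.disjoint_def.2 ?_)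
  intro p hp hpI
  by_contra hp0
  obtain ⟨μ, hμ⟩ := exists_isLeadMon hσ hp0
  refine hμ.not_isStdMon hinit ?_ ((mem_restrictSupport_iff K).1 (hspan hp) hμ.1)
  simpa [Ideal.Quotient.eq_zero_iff_mem] using hpI

theorem revLexLT_of_mem_support_of_monomial_sub_mem
    (hσ : Function.Injective σ) (hinit : initialIdeal σ I = JHIdeal K H) {μ ν : H →₀ ℕ}
    (hμ : ¬ IsStdMon μ) {r : MvPolynomial H K} (hr : ∀ ν ∈ r.support, IsStdMon ν)
    (hrI : monomial μ 1 - r ∈ I) (hν : ν ∈ r.support) : RevLexLT σ ν μ := by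
  classical
  have hsupp : ∀ ρ ≠ μ, ρ ∈ (monomial μ (1 : K) - r).support ↔ ρ ∈ r.support := fun ρ hρ => by
    simp [mem_support_iff, coeff_monomial, Ne.symm hρ]
  have hνμ : ν ≠ μ := fun h => hμ (h ▸ hr ν hν)
  have hne : monomial μ (1 : K) - r ≠ 0 := fun h0 => by
    have := congrArg (coeff μ) h0
    simp [coeff_monomial, notMem_support_iff.1 fun h => hμ (hr μ h)] at this
  obtain ⟨ρ, hρ⟩ := exists_isLeadMon hσ hne
  obtain rfl : ρ = μ := by
    by_contra h
    exact hρ.not_isStdMon hinit hrI (hr ρ ((hsupp ρ h).1 hρ.1))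
  exact hρ.2 ν ((hsupp ν hνμ).2 hν) hνμ

theorem exists_eq_single_add_single_of_mdeg_eq_two {ν : H →₀ ℕ} (hstd : IsStdMon ν)
    (hdeg : mdeg ν = 2) : ∃ z t, z ≤ t ∧ ν = single z 1 + single t 1 := by
  classical
  obtain ⟨z, t, hzt⟩ := Multiset.card_eq_two.1 ((Finsupp.card_toMultiset ν).trans hdeg)
  have hν : ν = single z 1 + single t 1 := by
    rw [← Multiset.toFinsupp_eq_iff.2 hzt.symm, Multiset.insert_eq_cons, ← Multiset.singleton_add,
      Multiset.toFinsupp_add, Multiset.toFinsupp_singleton, Multiset.toFinsupp_singleton]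
  have hz : z ∈ ν.support := (Finsupp.mem_toMultiset ν z).1 (by simp [hzt])
  have ht : t ∈ ν.support := (Finsupp.mem_toMultiset ν t).1 (by simp [hzt])
  rcases hstd z hz t ht with h | h
  · exact ⟨z, t, h, hν⟩
  · exact ⟨t, z, h, by rw [hν, add_comm]⟩

theorem exists_eq_sum_smul_X_mul_X {r : MvPolynomial H K} (hr : r.IsHomogeneous 2)
    (hstd : ∀ ν ∈ r.support, IsStdMon ν) :
    ∃ (s : Finset (H × H)) (c : H × H → K),
      (∀ p ∈ s, p.1 ≤ p.2 ∧ single p.1 1 + single p.2 1 ∈ r.support) ∧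
      r = ∑ p ∈ s, c p • (X p.1 * X p.2) := by
  classical
  have hpair : ∀ ν ∈ r.support, ∃ p : H × H, p.1 ≤ p.2 ∧ single p.1 1 + single p.2 1 = ν := by
    intro ν hν
    have hdeg : mdeg ν = 2 := by
      rw [mdeg_eq_degree, Finsupp.degree_eq_weight_one]
      exact hr (mem_support_iff.1 hν)
    obtain ⟨z, t, hzt, rfl⟩ := exists_eq_single_add_single_of_mdeg_eq_two (hstd ν hν) hdeg
    exact ⟨(z, t), hzt, rfl⟩
  choose F hF using hpair
  refine ⟨r.support.attach.image fun ν => F ν.1 ν.2,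
    fun p => coeff (single p.1 1 + single p.2 1) r, ?_, ?_⟩
  · simp only [Finset.mem_image, Finset.mem_attach, true_and]
    rintro _ ⟨⟨ν, hν⟩, rfl⟩
    exact ⟨(hF ν hν).1, by rw [(hF ν hν).2]; exact hν⟩
  · rw [Finset.sum_image fun a _ b _ h => Subtype.ext <| by
      rw [← (hF a.1 a.2).2, ← (hF b.1 b.2).2, h]]
    conv_lhs => rw [r.as_sum, ← Finset.sum_attach]
    refine Finset.sum_congr rfl fun ν _ => ?_
    dsimp only
    rw [X_mul_X_eq_monomial, smul_monomial, smul_eq_mul, mul_one, (hF ν.1 ν.2).2]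

end StandardMonomials

section LinearExtensions

variable {H : Type*} [PartialOrder H]

variable (H) in
theorem exists_isLinExt [Fintype H] :
    ∃ σ : H → ℕ, IsLinExt σ ∧ ∀ a, σ a < Fintype.card H := by
  let : Fintype (LinearExtension H) := inferInstanceAs (Fintype H)
  let e := (Fintype.orderIsoFinOfCardEq (LinearExtension H) (k := Fintype.card H) rfl).symm
  have hmono : StrictMono (toLinearExtension : H → LinearExtension H) :=
    toLinearExtension.monotone.strictMono_of_injective fun _ _ h => h
  exact ⟨fun a => e (toLinearExtension a),
    ⟨fun a b h => e.injective (Fin.val_injective h), fun a b h => e.strictMono (hmono h)⟩,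
    fun a => (e _).is_lt⟩

theorem exists_isLinExt_lt_of_not_le [Fintype H] (b : H) :
    ∃ σ : H → ℕ, IsLinExt σ ∧ ∀ a, ¬ a ≤ b → σ b < σ a := by
  classical
  obtain ⟨σ, ⟨hinj, hmono⟩, hlt⟩ := exists_isLinExt H
  refine ⟨fun a => if a ≤ b then σ a else σ a + Fintype.card H,
    ⟨fun u v huv => hinj ?_, fun u v huv => ?_⟩, fun a ha => ?_⟩
  · have := hlt u; have := hlt v
    dsimp only at huv
    split_ifs at huv <;> omega
  · have := hmono u v huv; have := hlt u
    dsimp only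
    split_ifs with hu hv hv
    · omega
    · omega
    · exact absurd (huv.le.trans hv) hu
    · omega
  · have := hlt b
    simp only [le_refl, if_true, ha, if_false]
    omega

theorem exists_lt_of_forall_revLexLT [Fintype H] {μ ν : H →₀ ℕ} (hdeg : mdeg ν = mdeg μ)
    (h : ∀ σ, IsLinExt σ → RevLexLT σ ν μ) {b : H} (hb : ν b < μ b) :
    ∃ a, μ a < ν a ∧ a < b := by
  by_contra hcon
  push Not at hcon
  obtain ⟨σ, hσ, hσb⟩ := exists_isLinExt_lt_of_not_le b
  rcases h σ hσ with hd | ⟨-, a, ha, hbelow⟩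
  · exact hd.ne hdeg
  · have hab : ¬ a ≤ b := fun hle => hle.lt_or_eq.elim (hcon a ha) (by rintro rfl; omega)
    have := hbelow b (hσb a hab)
    omega

theorem lt_of_forall_revLexLT_single_add_single [Fintype H] {x y z t : H} (hxy : ¬ x ≤ y)
    (hzt : z ≤ t) (hne : single z 1 + single t 1 ≠ single x 1 + single y 1)
    (h : ∀ σ, IsLinExt σ → RevLexLT σ (single z 1 + single t 1) (single x 1 + single y 1)) :
    z < x := by
  set ν : H →₀ ℕ := single z 1 + single t 1
  set μ : H →₀ ℕ := single x 1 + single y 1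
  have hdeg : mdeg ν = mdeg μ := by
    simp only [ν, μ, mdeg_eq_degree, map_add, Finsupp.degree_single]
  have hz : ∀ b, ν b < μ b → z < b := by
    intro b hb
    obtain ⟨a, ha, hab⟩ := exists_lt_of_forall_revLexLT hdeg h hb
    rcases single_add_single_apply_ne_zero.1 (by omega : ν a ≠ 0) with rfl | rfl
    exacts [hab, hzt.trans_lt hab]
  by_contra hzx
  have hxz : x = z := by
    have hμx : μ x ≠ 0 := single_add_single_apply_ne_zero.2 (Or.inl rfl)
    have hνx : ν x ≠ 0 := fun h0 => hzx (hz x (by omega))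
    rcases single_add_single_apply_ne_zero.1 hνx with rfl | rfl
    · rfl
    · exact (hzt.lt_or_eq.resolve_left hzx).symm
  obtain ⟨b, hb⟩ := exists_lt_of_mdeg_eq_of_ne hdeg hne
  rcases single_add_single_apply_ne_zero.1 (by omega : μ b ≠ 0) with rfl | rfl
  · exact hzx (hz _ hb)
  · exact hxy (hxz ▸ hz _ hb).le

end LinearExtensions

theorem stmt16_general {K H : Type*} [Field K] [Fintype H]
    [PartialOrder H] (I : Ideal (MvPolynomial H K))
    (hhom : I.IsHomogeneous (homogeneousSubmodule H K))
    (hinit : ∀ σ : H → ℕ, IsLinExt σ → initialIdeal σ I = JHIdeal K H) :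
    LinearIndependent K
      (fun μ : {μ : H →₀ ℕ // IsStdMon μ} =>
        Ideal.Quotient.mk I (monomial μ.1 (1 : K))) ∧
    ∀ x y : H, ¬ x ≤ y → ¬ y ≤ x →
      ∃ (s : Finset (H × H)) (c : H × H → K),
        (∀ p ∈ s, p.1 ≤ p.2 ∧ p.1 < x ∧ p.1 < y) ∧
        X x * X y - ∑ p ∈ s, c p • (X p.1 * X p.2) ∈ I := by
  obtain ⟨σ₀, hσ₀, -⟩ := exists_isLinExt H
  refine ⟨linearIndependent_isStdMon hσ₀.1 (hinit σ₀ hσ₀), fun x y hxy hyx => ?_⟩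
  have hμ : ¬ IsStdMon (single x 1 + single y 1) := by
    rw [← monomial_mem_JHIdeal_iff (K := K), ← X_mul_X_eq_monomial]
    exact Ideal.subset_span ⟨x, y, hxy, hyx, rfl⟩
  obtain ⟨r, hr, hrstd, hrI⟩ := exists_isHomogeneous_sub_mem hσ₀.1 (hinit σ₀ hσ₀) hhom
    ((isHomogeneous_X K x).mul (isHomogeneous_X K y))
  obtain ⟨s, c, hs, rfl⟩ := exists_eq_sum_smul_X_mul_X hr hrstd
  refine ⟨s, c, fun p hp => ?_, hrI⟩
  obtain ⟨hle, hp⟩ := hs p hp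
  rw [X_mul_X_eq_monomial] at hrI
  have hlt := fun σ hσ =>
    revLexLT_of_mem_support_of_monomial_sub_mem hσ.1 (hinit σ hσ) hμ hrstd hrI hp
  have hne : single p.1 1 + single p.2 1 ≠ single x 1 + single y 1 := fun h => hμ (h ▸ hrstd _ hp)
  refine ⟨hle, lt_of_forall_revLexLT_single_add_single hxy hle hne hlt, ?_⟩
  rw [add_comm (single x 1)] at hne hlt
  exact lt_of_forall_revLexLT_single_add_single hyx hle hne hlt

/-- let `H` be a finite poset, `K` a field and `A = K[H]/I` with
`I` homogeneous.  If `in_τ(I) = J_H` for every revlex term order `τ` coming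
from a linear extension `σ` of the order of `H`, then `A` is a homogeneous ASL
on `H`: (ASL1) the standard monomials are linearly independent in `A`, and
(ASL2) for each incomparable pair `x, y` the ideal `I` contains a straightening
relation `xy − ∑ λ_{zt} zt` with `z ≤ t`, `z < x` and `z < y`. -/
theorem stmt16 {K H : Type*} [Field K] [Fintype H] [DecidableEq H]
    [PartialOrder H] (I : Ideal (MvPolynomial H K))
    (hhom : I.IsHomogeneous (homogeneousSubmodule H K))
    (hinit : ∀ σ : H → ℕ, IsLinExt σ → initialIdeal σ I = JHIdeal K H) :
    LinearIndependent K
      (fun μ : {μ : H →₀ ℕ // IsStdMon μ} =>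
        Ideal.Quotient.mk I (monomial μ.1 (1 : K))) ∧
    ∀ x y : H, ¬ x ≤ y → ¬ y ≤ x →
      ∃ (s : Finset (H × H)) (c : H × H → K),
        (∀ p ∈ s, p.1 ≤ p.2 ∧ p.1 < x ∧ p.1 < y) ∧
        X x * X y - ∑ p ∈ s, c p • (X p.1 * X p.2) ∈ I :=
  stmt16_general I hhom hinit
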